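/- Let n ≥ 1 and let F_1, …, F_n : ℝ^d → ℝ^d be operators with average F = (1/n)∑_{i=1}^n F_i. Suppose each F_i is ℓ-cocoercive, F is μ-strongly monotone, and the stepsize satisfies 0 < γ ≤ 1/ℓ. Then the SARAH inner-loop trajectory satisfies 𝔼[‖F(z^K)‖²] ≤ (2γℓ/(2 − γℓ) + 2(1 − γμ)^K) · ‖F(z⁰)‖². -/

import Mathlib

/-!
The Lyapunov function `Φ(z, v) = ‖F(z) - v‖² + c ‖v‖²` with `c = γℓ / (2 - γℓ)` does not
increase in expectation along a SARAH step: the sampled increments `w_i = F_i(z') - F_i(z)`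
average to `F(z') - F(z)`, and cocoercivity of every `F_i` bounds their second moment by
`-γℓ ⟨F(z') - F(z), v⟩`, which exactly absorbs the cross terms. Strong monotonicity of `F`
further makes `𝔼‖v^k‖²` contract by the factor `1 - γμ` per step. As `Φ(z⁰, v⁰) = c ‖F(z⁰)‖²`
and `‖F(z)‖² ≤ 2 Φ(z, v) + 2 ‖v‖²`, the bound follows.
-/
open Finset

noncomputable section

/-- An operator `G : ℝ^d → ℝ^d` is `ℓ`-cocoercive:
`‖G(u) - G(v)‖² ≤ ℓ ⟨G(u) - G(v), u - v⟩` for all `u, v`. -/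
def Cocoercive {d : ℕ} (ℓ : ℝ)
    (G : EuclideanSpace ℝ (Fin d) → EuclideanSpace ℝ (Fin d)) : Prop :=
  ∀ u v : EuclideanSpace ℝ (Fin d),
    ‖G u - G v‖ ^ 2 ≤ ℓ * (inner ℝ (G u - G v) (u - v) : ℝ)

/-- An operator `G : ℝ^d → ℝ^d` is `μ`-strongly monotone:
`⟨G(u) - G(v), u - v⟩ ≥ μ ‖u - v‖²` for all `u, v`. -/
def StronglyMonotone {d : ℕ} (μ : ℝ)
    (G : EuclideanSpace ℝ (Fin d) → EuclideanSpace ℝ (Fin d)) : Prop :=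
  ∀ u v : EuclideanSpace ℝ (Fin d),
    μ * ‖u - v‖ ^ 2 ≤ (inner ℝ (G u - G v) (u - v) : ℝ)

/-- The average operator `F = (1/n) ∑_{i=1}^n F_i`. -/
def opAvg {d n : ℕ} (F : Fin n → EuclideanSpace ℝ (Fin d) → EuclideanSpace ℝ (Fin d)) :
    EuclideanSpace ℝ (Fin d) → EuclideanSpace ℝ (Fin d) :=
  fun z => (n : ℝ)⁻¹ • ∑ i, F i z

/-- One step of the SARAH recursion: from `(z, v)` and index `i`, go to `(z', v')`
with `z' = z - γ v` and `v' = F_i(z') - F_i(z) + v`. -/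
def sarahStep {d n : ℕ} (γ : ℝ)
    (F : Fin n → EuclideanSpace ℝ (Fin d) → EuclideanSpace ℝ (Fin d)) (i : Fin n)
    (p : EuclideanSpace ℝ (Fin d) × EuclideanSpace ℝ (Fin d)) :
    EuclideanSpace ℝ (Fin d) × EuclideanSpace ℝ (Fin d) :=
  (p.1 - γ • p.2, F i (p.1 - γ • p.2) - F i p.1 + p.2)

/-- Run SARAH steps along a list of indices. -/
def sarahRun {d n : ℕ} (γ : ℝ)
    (F : Fin n → EuclideanSpace ℝ (Fin d) → EuclideanSpace ℝ (Fin d)) :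
    EuclideanSpace ℝ (Fin d) × EuclideanSpace ℝ (Fin d) → List (Fin n) →
      EuclideanSpace ℝ (Fin d) × EuclideanSpace ℝ (Fin d)
  | p, [] => p
  | p, i :: l => sarahRun γ F (sarahStep γ F i p) l

/-- The SARAH inner-loop trajectory `(z^k, v^k)` started at `z^0 = z0` with
`v^0 = F(z^0)`, for the index sequence `j : Fin K → Fin n` (so `i_k = j (k-1)`):
`sarahTraj γ F z0 j k = (z^k, v^k)` is obtained by performing the SARAH steps
with the first `k` indices `i_1, …, i_k`. -/
def sarahTraj {d n K : ℕ} (γ : ℝ)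
    (F : Fin n → EuclideanSpace ℝ (Fin d) → EuclideanSpace ℝ (Fin d))
    (z0 : EuclideanSpace ℝ (Fin d)) (j : Fin K → Fin n) (k : ℕ) :
    EuclideanSpace ℝ (Fin d) × EuclideanSpace ℝ (Fin d) :=
  sarahRun γ F (z0, opAvg F z0) ((List.ofFn j).take k)


open RealInnerProductSpace

section Sums

variable {E : Type*} [NormedAddCommGroup E] [InnerProductSpace ℝ E] {ι : Type*}

theorem sum_norm_add_sq (s : Finset ι) (x : ι → E) (a : E) :
    ∑ i ∈ s, ‖x i + a‖ ^ 2 = ∑ i ∈ s, ‖x i‖ ^ 2 + 2 * ⟪∑ i ∈ s, x i, a⟫ + #s * ‖a‖ ^ 2 := by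
  simp only [norm_add_sq_real, sum_add_distrib, sum_inner, mul_sum, sum_const, nsmul_eq_mul]

theorem sum_norm_sub_sq_of_sum_eq (s : Finset ι) (x : ι → E) {m : E}
    (hm : ∑ i ∈ s, x i = (#s : ℝ) • m) :
    ∑ i ∈ s, ‖x i - m‖ ^ 2 = ∑ i ∈ s, ‖x i‖ ^ 2 - #s * ‖m‖ ^ 2 := by
  simp only [sub_eq_add_neg, sum_norm_add_sq, hm, inner_neg_right, real_inner_smul_left,
    real_inner_self_eq_norm_sq, norm_neg]
  ring

end Sums

theorem sum_fun_fin_succ_ofFn {ι M : Type*} [Fintype ι] [AddCommMonoid M] (f : List ι → M)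
    (k : ℕ) :
    ∑ j : Fin (k + 1) → ι, f (List.ofFn j) = ∑ i, ∑ j : Fin k → ι, f (i :: List.ofFn j) := by
  rw [← (Fin.consEquiv fun _ => ι).sum_comp, Fintype.sum_prod_type]
  simp [Fin.consEquiv, List.ofFn_succ]

section Sarah

variable {d n : ℕ} {F : Fin n → EuclideanSpace ℝ (Fin d) → EuclideanSpace ℝ (Fin d)}

theorem card_smul_opAvg (z : EuclideanSpace ℝ (Fin d)) : (n : ℝ) • opAvg F z = ∑ i, F i z := by
  rcases n.eq_zero_or_pos with rfl | hn
  · simp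
  · simp [opAvg, smul_smul, hn.ne']

theorem sum_sub_eq_card_smul_opAvg_sub (u v : EuclideanSpace ℝ (Fin d)) :
    ∑ i, (F i u - F i v) = (n : ℝ) • (opAvg F u - opAvg F v) := by
  rw [smul_sub, card_smul_opAvg, card_smul_opAvg, sum_sub_distrib]

theorem sum_norm_sub_sq_le_of_cocoercive {ℓ : ℝ} (hco : ∀ i, Cocoercive ℓ (F i))
    (u v : EuclideanSpace ℝ (Fin d)) :
    ∑ i, ‖F i u - F i v‖ ^ 2 ≤ ℓ * (n * ⟪opAvg F u - opAvg F v, u - v⟫) := by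
  calc ∑ i, ‖F i u - F i v‖ ^ 2 ≤ ∑ i, ℓ * ⟪F i u - F i v, u - v⟫ :=
        sum_le_sum fun i _ => hco i u v
    _ = ℓ * (n * ⟪opAvg F u - opAvg F v, u - v⟫) := by
        rw [← mul_sum, ← sum_inner, sum_sub_eq_card_smul_opAvg_sub, real_inner_smul_left]

variable {γ ℓ : ℝ}

theorem sum_norm_sarahStep_snd_sq (z v : EuclideanSpace ℝ (Fin d)) :
    ∑ i, ‖(sarahStep γ F i (z, v)).2‖ ^ 2 = ∑ i, ‖F i (z - γ • v) - F i z‖ ^ 2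
      + 2 * (n * ⟪opAvg F (z - γ • v) - opAvg F z, v⟫) + n * ‖v‖ ^ 2 := by
  simp only [sarahStep, sum_norm_add_sq, sum_sub_eq_card_smul_opAvg_sub, real_inner_smul_left,
    card_univ, Fintype.card_fin]

theorem sum_norm_sarahStep_sub_sq_le (hco : ∀ i, Cocoercive ℓ (F i))
    (z v : EuclideanSpace ℝ (Fin d)) :
    ∑ i, ‖F i (z - γ • v) - F i z‖ ^ 2
      ≤ -(γ * ℓ) * (n * ⟪opAvg F (z - γ • v) - opAvg F z, v⟫) := by
  have h := sum_norm_sub_sq_le_of_cocoercive hco (z - γ • v) z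
  rw [sub_sub_cancel_left, inner_neg_right, real_inner_smul_right] at h
  linarith

theorem sum_norm_sarahStep_snd_sq_le {μ : ℝ} (hco : ∀ i, Cocoercive ℓ (F i))
    (hsm : StronglyMonotone μ (opAvg F)) (hμ : 0 ≤ μ) (hγ : 0 < γ) (hγℓ : γ * ℓ ≤ 1)
    (p : EuclideanSpace ℝ (Fin d) × EuclideanSpace ℝ (Fin d)) :
    ∑ i, ‖(sarahStep γ F i p).2‖ ^ 2 ≤ n * (1 - γ * μ) * ‖p.2‖ ^ 2 := by
  obtain ⟨z, v⟩ := p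
  have hco' := sum_norm_sarahStep_sub_sq_le (γ := γ) hco z v
  have hsm' := hsm (z - γ • v) z
  rw [sum_norm_sarahStep_snd_sq]
  set A := ⟪opAvg F (z - γ • v) - opAvg F z, v⟫
  rw [sub_sub_cancel_left, inner_neg_right, real_inner_smul_right, norm_neg, norm_smul,
    Real.norm_eq_abs, abs_of_pos hγ] at hsm'
  have hA : A ≤ -(γ * μ) * ‖v‖ ^ 2 := by nlinarith
  have hnA : (n : ℝ) * A ≤ n * (-(γ * μ) * ‖v‖ ^ 2) := by gcongr
  have hA0 : -(γ * μ) * ‖v‖ ^ 2 ≤ 0 := by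
    rw [neg_mul, neg_nonpos]; positivity
  have hnA0 : (1 - γ * ℓ) * (n * A) ≤ 0 := mul_nonpos_of_nonneg_of_nonpos (by linarith)
    (hnA.trans (mul_nonpos_of_nonneg_of_nonpos n.cast_nonneg hA0))
  linear_combination hco' + hnA + hnA0

def sarahLyapunov (F : Fin n → EuclideanSpace ℝ (Fin d) → EuclideanSpace ℝ (Fin d)) (c : ℝ)
    (p : EuclideanSpace ℝ (Fin d) × EuclideanSpace ℝ (Fin d)) : ℝ :=
  ‖opAvg F p.1 - p.2‖ ^ 2 + c * ‖p.2‖ ^ 2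

theorem sum_sarahLyapunov_sarahStep_le (hco : ∀ i, Cocoercive ℓ (F i)) (hγℓ : γ * ℓ < 2)
    (p : EuclideanSpace ℝ (Fin d) × EuclideanSpace ℝ (Fin d)) :
    ∑ i, sarahLyapunov F (γ * ℓ / (2 - γ * ℓ)) (sarahStep γ F i p)
      ≤ n * sarahLyapunov F (γ * ℓ / (2 - γ * ℓ)) p := by
  obtain ⟨z, v⟩ := p
  have hco' := sum_norm_sarahStep_sub_sq_le (γ := γ) hco z v
  set c := γ * ℓ / (2 - γ * ℓ)
  set w := fun i => F i (z - γ • v) - F i z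
  set wb := opAvg F (z - γ • v) - opAvg F z
  have hw : ∑ i, w i = (#(univ : Finset (Fin n)) : ℝ) • wb := by
    rw [card_univ, Fintype.card_fin, ← sum_sub_eq_card_smul_opAvg_sub]
  have hw0 : ∑ i, (w i - wb) = 0 := by
    rw [sum_sub_distrib, hw, sum_const, Nat.cast_smul_eq_nsmul, sub_self]
  have hbias : ∑ i, ‖opAvg F (sarahStep γ F i (z, v)).1 - (sarahStep γ F i (z, v)).2‖ ^ 2
      = ∑ i, ‖w i‖ ^ 2 - n * ‖wb‖ ^ 2 + n * ‖v - opAvg F z‖ ^ 2 := by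
    have hdecomp : ∀ i, (sarahStep γ F i (z, v)).2 - opAvg F (sarahStep γ F i (z, v)).1
        = (w i - wb) + (v - opAvg F z) := fun i => by simp only [sarahStep, w, wb]; abel
    simp only [norm_sub_rev (opAvg F _), hdecomp, sum_norm_add_sq, hw0, inner_zero_left,
      sum_norm_sub_sq_of_sum_eq _ _ hw, card_univ, Fintype.card_fin]
    ring
  -- `c` is chosen so that `(1 + c) γ ℓ = 2 c`: the cocoercivity bound then cancels the cross term
  have hc : (1 + c) * (2 - γ * ℓ) = 2 := by
    have : 2 - γ * ℓ ≠ 0 := by linarith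
    simp only [c]; field_simp; ring
  have hc1 : 0 ≤ 1 + c := by nlinarith
  simp only [sarahLyapunov, sum_add_distrib, ← mul_sum, hbias, sum_norm_sarahStep_snd_sq,
    norm_sub_rev v]
  linear_combination mul_le_mul_of_nonneg_left hco' hc1 + (n * ⟪wb, v⟫) * hc
    + mul_nonneg (Nat.cast_nonneg n) (sq_nonneg ‖wb‖)

theorem sum_sarahRun_ofFn_le {φ : EuclideanSpace ℝ (Fin d) × EuclideanSpace ℝ (Fin d) → ℝ}
    (hφ : ∀ p, 0 ≤ φ p) {ρ : ℝ} (hstep : ∀ p, ∑ i, φ (sarahStep γ F i p) ≤ ρ * φ p) (k : ℕ)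
    (p : EuclideanSpace ℝ (Fin d) × EuclideanSpace ℝ (Fin d)) :
    ∑ j : Fin k → Fin n, φ (sarahRun γ F p (List.ofFn j)) ≤ ρ ^ k * φ p := by
  rcases lt_or_ge ρ 0 with hρ | hρ
  · -- a negative rate forces `φ = 0`
    have hφ0 : ∀ q, φ q = 0 := fun q =>
      le_antisymm (nonpos_of_mul_nonneg_right
        ((sum_nonneg fun i _ => hφ _).trans (hstep q)) hρ) (hφ q)
    simp [hφ0]
  induction k generalizing p with
  | zero => simp [sarahRun]
  | succ k ih =>
    calc ∑ j : Fin (k + 1) → Fin n, φ (sarahRun γ F p (List.ofFn j))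
        = ∑ i, ∑ j : Fin k → Fin n, φ (sarahRun γ F (sarahStep γ F i p) (List.ofFn j)) :=
          sum_fun_fin_succ_ofFn (fun l => φ (sarahRun γ F p l)) k
      _ ≤ ∑ i, ρ ^ k * φ (sarahStep γ F i p) := sum_le_sum fun i _ => ih _
      _ ≤ ρ ^ k * (ρ * φ p) := by rw [← mul_sum]; gcongr; exact hstep p
      _ = ρ ^ (k + 1) * φ p := by ring

theorem sarahTraj_eq_sarahRun {K : ℕ} (z0 : EuclideanSpace ℝ (Fin d)) (j : Fin K → Fin n) :
    sarahTraj γ F z0 j K = sarahRun γ F (z0, opAvg F z0) (List.ofFn j) := by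
  rw [sarahTraj, List.take_of_length_le (List.length_ofFn).le]

theorem norm_opAvg_sq_le_sarahLyapunov {c : ℝ} (hc : 0 ≤ c)
    (p : EuclideanSpace ℝ (Fin d) × EuclideanSpace ℝ (Fin d)) :
    ‖opAvg F p.1‖ ^ 2 ≤ 2 * sarahLyapunov F c p + 2 * ‖p.2‖ ^ 2 := by
  have h := norm_le_norm_add_norm_sub' (opAvg F p.1) p.2
  unfold sarahLyapunov
  nlinarith [norm_nonneg (opAvg F p.1), sq_nonneg (‖opAvg F p.1 - p.2‖ - ‖p.2‖),
    mul_nonneg hc (sq_nonneg ‖p.2‖)]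

end Sarah

theorem sarah_FzK_bound_general {d n : ℕ} (hn : 1 ≤ n) (ℓ μ : ℝ) (hℓ : 0 < ℓ) (hμ : 0 < μ)
    (F : Fin n → EuclideanSpace ℝ (Fin d) → EuclideanSpace ℝ (Fin d))
    (hco : ∀ i, Cocoercive ℓ (F i)) (hsm : StronglyMonotone μ (opAvg F))
    (γ : ℝ) (hγ0 : 0 < γ) (hγ : γ ≤ 1 / ℓ)
    (K : ℕ) (z0 : EuclideanSpace ℝ (Fin d)) :
    (∑ j : Fin K → Fin n,
        ‖opAvg F (sarahTraj γ F z0 j K).1‖ ^ 2) / (n : ℝ) ^ K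
      ≤ (2 * γ * ℓ / (2 - γ * ℓ) + 2 * (1 - γ * μ) ^ K) * ‖opAvg F z0‖ ^ 2 := by
  have hγℓ : γ * ℓ ≤ 1 := by rwa [le_div_iff₀ hℓ] at hγ
  set c := γ * ℓ / (2 - γ * ℓ)
  have hc : 0 ≤ c := div_nonneg (by positivity) (by linarith)
  have hv := sum_sarahRun_ofFn_le (φ := fun p => ‖p.2‖ ^ 2) (fun p => sq_nonneg ‖p.2‖)
    (sum_norm_sarahStep_snd_sq_le hco hsm hμ.le hγ0 hγℓ) K (z0, opAvg F z0)
  have hΦ := sum_sarahRun_ofFn_le (φ := sarahLyapunov F c)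
    (fun p => add_nonneg (sq_nonneg _) (mul_nonneg hc (sq_nonneg ‖p.2‖)))
    (sum_sarahLyapunov_sarahStep_le hco (by linarith)) K (z0, opAvg F z0)
  have hΦ0 : sarahLyapunov F c (z0, opAvg F z0) = c * ‖opAvg F z0‖ ^ 2 := by
    simp [sarahLyapunov]
  rw [div_le_iff₀ (by positivity)]
  calc ∑ j : Fin K → Fin n, ‖opAvg F (sarahTraj γ F z0 j K).1‖ ^ 2
      ≤ ∑ j : Fin K → Fin n, (2 * sarahLyapunov F c (sarahRun γ F (z0, opAvg F z0) (List.ofFn j))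
          + 2 * ‖(sarahRun γ F (z0, opAvg F z0) (List.ofFn j)).2‖ ^ 2) :=
        sum_le_sum fun j _ => by
          rw [sarahTraj_eq_sarahRun]; exact norm_opAvg_sq_le_sarahLyapunov hc _
    _ ≤ 2 * (n ^ K * (c * ‖opAvg F z0‖ ^ 2))
          + 2 * ((n * (1 - γ * μ)) ^ K * ‖opAvg F z0‖ ^ 2) := by
        rw [sum_add_distrib, ← mul_sum, ← mul_sum, ← hΦ0]
        gcongr
    _ = (2 * γ * ℓ / (2 - γ * ℓ) + 2 * (1 - γ * μ) ^ K) * ‖opAvg F z0‖ ^ 2 * n ^ K := by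
        rw [mul_pow]; ring

/-- **Combination of Lemmas 1 and 2.** If each `F_i` is `ℓ`-cocoercive, the average
`F` is `μ`-strongly monotone and `0 < γ ≤ 1/ℓ`, then the SARAH inner loop satisfies
`𝔼[‖F(z^K)‖²] ≤ (2γℓ/(2 - γℓ) + 2(1 - γμ)^K) ‖F(z^0)‖²`, where the expectation is the
uniform average over all `n^K` index sequences. -/
theorem sarah_FzK_bound {d n : ℕ} (hn : 1 ≤ n) (ℓ μ : ℝ) (hℓ : 0 < ℓ) (hμ : 0 < μ)
    (F : Fin n → EuclideanSpace ℝ (Fin d) → EuclideanSpace ℝ (Fin d))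
    (hco : ∀ i, Cocoercive ℓ (F i)) (hsm : StronglyMonotone μ (opAvg F))
    (γ : ℝ) (hγ0 : 0 < γ) (hγ : γ ≤ 1 / ℓ)
    (K : ℕ) (hK : 1 ≤ K) (z0 : EuclideanSpace ℝ (Fin d)) :
    (∑ j : Fin K → Fin n,
        ‖opAvg F (sarahTraj γ F z0 j K).1‖ ^ 2) / (n : ℝ) ^ K
      ≤ (2 * γ * ℓ / (2 - γ * ℓ) + 2 * (1 - γ * μ) ^ K) * ‖opAvg F z0‖ ^ 2 :=
  sarah_FzK_bound_general hn ℓ μ hℓ hμ F hco hsm γ hγ0 hγ K z0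

end
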